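/- The fair coalition number of the complete bipartite graph K_{3,3} equals 6. -/

import Mathlib

open SimpleGraph

/-- `D` is a fair dominating set of `G`: it is a dominating set and there is some
`k ≥ 1` such that every vertex outside `D` has exactly `k` neighbors in `D`. -/
def IsFairDomSet {V : Type*} (G : SimpleGraph V) (D : Set V) : Prop :=
  (∀ v ∉ D, ∃ u ∈ D, G.Adj v u) ∧
  ∃ k : ℕ, 1 ≤ k ∧ ∀ v ∉ D, (G.neighborSet v ∩ D).ncard = k

/-- A fair coalition partition of `G`: a partition of the vertex set into nonempty parts,
each of which is either a singleton fair dominating set, or is not a fair dominating set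
but forms a fair coalition with another part that is not a fair dominating set. -/
def IsFairCoalitionPartition {V : Type*} (G : SimpleGraph V) (P : Finset (Set V)) : Prop :=
  (∀ A ∈ P, A.Nonempty) ∧
  (P : Set (Set V)).PairwiseDisjoint id ∧
  ⋃₀ (P : Set (Set V)) = Set.univ ∧
  ∀ A ∈ P, ((∃ v, A = {v}) ∧ IsFairDomSet G A) ∨
    (¬ IsFairDomSet G A ∧ ∃ B ∈ P, B ≠ A ∧ ¬ IsFairDomSet G B ∧ IsFairDomSet G (A ∪ B))

/-- The fair coalition number of `G`: the maximum number of parts in a fair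
coalition partition of `G`. -/
noncomputable def fairCoalitionNumber {V : Type*} (G : SimpleGraph V) : ℕ :=
  sSup {n | ∃ P : Finset (Set V), IsFairCoalitionPartition G P ∧ P.card = n}

/-!
Splitting the vertices into singletons gives the maximum conceivable number of parts, and it is a
fair coalition partition of `K_{m,n}` for `m, n ≥ 2`: no single vertex dominates its own side,
while any two vertices on opposite sides form a `1`-fair dominating set.
-/

section FairCoalition

variable {V : Type*} {G : SimpleGraph V}

theorem Finset.card_le_of_pairwiseDisjoint_nonempty [Fintype V] {P : Finset (Set V)}
    (hne : ∀ A ∈ P, A.Nonempty) (hdisj : (P : Set (Set V)).PairwiseDisjoint id) :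
    P.card ≤ Fintype.card V := by
  classical
  calc P.card ≤ (P.biUnion fun A ↦ A.toFinset).card :=
        card_le_card_biUnion (fun A hA B hB hAB ↦ Set.disjoint_toFinset.2 (hdisj hA hB hAB))
          (fun A hA ↦ Set.toFinset_nonempty.2 (hne A hA))
    _ ≤ Fintype.card V := card_le_univ _

theorem IsFairCoalitionPartition.card_le [Fintype V] {P : Finset (Set V)}
    (hP : IsFairCoalitionPartition G P) : P.card ≤ Fintype.card V :=
  Finset.card_le_of_pairwiseDisjoint_nonempty hP.1 hP.2.1

theorem isFairCoalitionPartition_singletons [Fintype V]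
    (h : ∀ v, ¬ IsFairDomSet G {v} → ∃ w ≠ v, ¬ IsFairDomSet G {w} ∧ IsFairDomSet G {v, w}) :
    IsFairCoalitionPartition G (Finset.univ.map ⟨singleton, Set.singleton_injective⟩) := by
  simp only [IsFairCoalitionPartition, Finset.mem_map, Finset.mem_univ, true_and,
    Function.Embedding.coeFn_mk, forall_exists_index, forall_apply_eq_imp_iff, Finset.coe_map,
    Finset.coe_univ, Set.image_univ]
  refine ⟨fun v ↦ Set.singleton_nonempty v, ?_, ?_, fun v ↦ ?_⟩
  · rintro _ ⟨v, rfl⟩ _ ⟨w, rfl⟩ hvw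
    exact Set.disjoint_singleton.2 fun h ↦ hvw (congrArg _ h)
  · exact Set.eq_univ_of_forall fun v ↦ ⟨{v}, ⟨v, rfl⟩, rfl⟩
  · by_cases hv : IsFairDomSet G {v}
    · exact Or.inl ⟨⟨v, rfl⟩, hv⟩
    · obtain ⟨w, hwv, hw, hvw⟩ := h v hv
      exact Or.inr ⟨hv, {w}, ⟨w, rfl⟩, Set.singleton_eq_singleton_iff.not.2 hwv, hw,
        by rwa [Set.singleton_union]⟩

theorem fairCoalitionNumber_eq_card [Fintype V]
    (h : ∀ v, ¬ IsFairDomSet G {v} → ∃ w ≠ v, ¬ IsFairDomSet G {w} ∧ IsFairDomSet G {v, w}) :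
    fairCoalitionNumber G = Fintype.card V :=
  IsGreatest.csSup_eq
    ⟨⟨_, isFairCoalitionPartition_singletons h, by simp⟩, by rintro _ ⟨P, hP, rfl⟩; exact hP.card_le⟩

end FairCoalition

section CompleteBipartite

variable {α β : Type*}

theorem not_isFairDomSet_singleton_inl [Nontrivial α] (a : α) :
    ¬ IsFairDomSet (completeBipartiteGraph α β) {Sum.inl a} := by
  rintro ⟨hdom, -⟩
  obtain ⟨a', ha'⟩ := exists_ne a
  obtain ⟨u, rfl, hadj⟩ := hdom (Sum.inl a') (by simpa using ha')
  simp at hadj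

theorem not_isFairDomSet_singleton_inr [Nontrivial β] (b : β) :
    ¬ IsFairDomSet (completeBipartiteGraph α β) {Sum.inr b} := by
  rintro ⟨hdom, -⟩
  obtain ⟨b', hb'⟩ := exists_ne b
  obtain ⟨u, rfl, hadj⟩ := hdom (Sum.inr b') (by simpa using hb')
  simp at hadj

theorem isFairDomSet_completeBipartiteGraph_pair (a : α) (b : β) :
    IsFairDomSet (completeBipartiteGraph α β) {Sum.inl a, Sum.inr b} := by
  refine ⟨?_, 1, le_rfl, ?_⟩
  · rintro (x | y) -
    · exact ⟨Sum.inr b, by simp, by simp⟩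
    · exact ⟨Sum.inl a, by simp, by simp⟩
  · rintro (x | y) hv
    · have : (completeBipartiteGraph α β).neighborSet (Sum.inl x) ∩ {Sum.inl a, Sum.inr b} =
          {Sum.inr b} := by
        ext (u | u) <;> simp
      rw [this, Set.ncard_singleton]
    · have : (completeBipartiteGraph α β).neighborSet (Sum.inr y) ∩ {Sum.inl a, Sum.inr b} =
          {Sum.inl a} := by
        ext (u | u) <;> simp
      rw [this, Set.ncard_singleton]

theorem fairCoalitionNumber_completeBipartiteGraph [Fintype α] [Fintype β] [Nontrivial α]
    [Nontrivial β] :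
    fairCoalitionNumber (completeBipartiteGraph α β) = Fintype.card α + Fintype.card β := by
  rw [fairCoalitionNumber_eq_card, Fintype.card_sum]
  rintro (a | b) -
  · obtain ⟨b⟩ : Nonempty β := inferInstance
    exact ⟨Sum.inr b, Sum.inr_ne_inl, not_isFairDomSet_singleton_inr b,
      isFairDomSet_completeBipartiteGraph_pair a b⟩
  · obtain ⟨a⟩ : Nonempty α := inferInstance
    exact ⟨Sum.inl a, Sum.inl_ne_inr, not_isFairDomSet_singleton_inl a,
      Set.pair_comm _ _ ▸ isFairDomSet_completeBipartiteGraph_pair a b⟩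

end CompleteBipartite

theorem stmt_12 :
    fairCoalitionNumber (completeBipartiteGraph (Fin 3) (Fin 3)) = 6 := by
  rw [fairCoalitionNumber_completeBipartiteGraph, Fintype.card_fin]
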